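/- For every n ≥ 1 and k, h ∈ ℕ and all words w, w', u ∈ A* with |u| ≤ h: if wu ≼_{k+h} w'u (with respect to Σ_n(<)) then w ≼_k w'. -/

import Mathlib

universe u

/-- First-order formulas over words on alphabet `A`, in the signature of `Σ_n(<)`:
letter tests `a(x)`, linear order `x < y` and equality; variables are indexed by `ℕ`. -/
inductive FO (A : Type*) : Type _
  | letter : A → ℕ → FO A
  | lt : ℕ → ℕ → FO A
  | eq : ℕ → ℕ → FO A
  | not : FO A → FO A
  | or : FO A → FO A → FO A
  | and : FO A → FO A → FO A
  | ex : ℕ → FO A → FO A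
  | all : ℕ → FO A → FO A

/-- Quantifier-free formulas. -/
inductive FO.QF {A : Type*} : FO A → Prop
  | letter (a : A) (v : ℕ) : QF (.letter a v)
  | lt (v v' : ℕ) : QF (.lt v v')
  | eq (v v' : ℕ) : QF (.eq v v')
  | not {f} : QF f → QF f.not
  | or {f g} : QF f → QF g → QF (f.or g)
  | and {f g} : QF f → QF g → QF (f.and g)

mutual
/-- `Σ_n` formulas: prenex formulas whose quantifiers form at most `n` alternating
blocks, starting with an existential block. -/
inductive FO.Sig {A : Type u} : ℕ → FO A → Prop
  | ofQF {n : ℕ} {f : FO A} : FO.QF f → FO.Sig n f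
  | ofPi {n : ℕ} {f : FO A} : FO.Pi n f → FO.Sig (n + 1) f
  | ex {n : ℕ} {v : ℕ} {f : FO A} : FO.Sig (n + 1) f → FO.Sig (n + 1) (.ex v f)

/-- `Π_n` formulas: prenex formulas whose quantifiers form at most `n` alternating
blocks, starting with a universal block. -/
inductive FO.Pi {A : Type u} : ℕ → FO A → Prop
  | ofQF {n : ℕ} {f : FO A} : FO.QF f → FO.Pi n f
  | ofSig {n : ℕ} {f : FO A} : FO.Sig n f → FO.Pi (n + 1) f
  | all {n : ℕ} {v : ℕ} {f : FO A} : FO.Pi (n + 1) f → FO.Pi (n + 1) (.all v f)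
end

/-- Free variables. -/
def FO.free {A : Type*} : FO A → Set ℕ
  | .letter _ v => {v}
  | .lt v v' => {v, v'}
  | .eq v v' => {v, v'}
  | .not f => f.free
  | .or f g => f.free ∪ g.free
  | .and f g => f.free ∪ g.free
  | .ex v f => f.free \ {v}
  | .all v f => f.free \ {v}

/-- Quantifier rank. -/
def FO.rank {A : Type*} : FO A → ℕ
  | .letter _ _ => 0
  | .lt _ _ => 0
  | .eq _ _ => 0
  | .not f => f.rank
  | .or f g => max f.rank g.rank
  | .and f g => max f.rank g.rank
  | .ex _ f => f.rank + 1
  | .all _ f => f.rank + 1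

/-- Satisfaction in a finite word `w` (positions `0, …, |w|-1`) under an assignment. -/
def FO.Sat {A : Type*} (w : List A) : (ℕ → ℕ) → FO A → Prop
  | ν, .letter a v => ∃ h : ν v < w.length, w.get ⟨ν v, h⟩ = a
  | ν, .lt v v' => ν v < ν v'
  | ν, .eq v v' => ν v = ν v'
  | ν, .not f => ¬ f.Sat w ν
  | ν, .or f g => f.Sat w ν ∨ g.Sat w ν
  | ν, .and f g => f.Sat w ν ∧ g.Sat w ν
  | ν, .ex v f => ∃ p : ℕ, p < w.length ∧ f.Sat w (Function.update ν v p)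
  | ν, .all v f => ∀ p : ℕ, p < w.length → f.Sat w (Function.update ν v p)

/-- `w ≼ₖ w'` for `Σ_n(<)`: every `Σ_n(<)` sentence of quantifier rank at most `k`
satisfied by `w` is satisfied by `w'`. -/
def SigLe {A : Type*} (n k : ℕ) (w w' : List A) : Prop :=
  ∀ f : FO A, FO.Sig n f → f.free = ∅ → f.rank ≤ k →
    (f.Sat w fun _ => 0) → (f.Sat w' fun _ => 0)

/-!
Removing the letters of `u` one at a time, it suffices to show that `W ≼_{k+1} W'` implies
`W.dropLast ≼_k W'.dropLast` for a nonempty word `W`. For a prenex `Σ_n` sentence `φ`, consider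
`∃ y, φ^{<y}`, where `φ^{<y}` guards every existential variable `x` of `φ` by `x < y` and every
universal one by `x ≤ y ∧ (x < y → …)`, all guards being pushed into the matrix (after renaming the
bound variables apart), so that `φ^{<y}` keeps the quantifier prefix of `φ`. This sentence is again
`Σ_n`, has rank `rank φ + 1`, and holds in `W` iff `φ` holds in `W.dropLast`: a universal
quantifier forces `y` to be the last position through the guard `x ≤ y`, and without universal
quantifiers, truth below some `y` already gives truth in `W.dropLast`.
-/

namespace FO

variable {A : Type*}

theorem sat_congr {w : List A} {f : FO A} {ν ν' : ℕ → ℕ} (h : ∀ v ∈ f.free, ν v = ν' v) :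
    f.Sat w ν ↔ f.Sat w ν' := by
  induction f generalizing ν ν' with
  | letter a v => simp only [Sat, h v rfl]
  | lt v v' | eq v v' => simp only [Sat, h v (.inl rfl), h v' (.inr rfl)]
  | not f ih => exact not_congr (ih h)
  | or f g ihf ihg | and f g ihf ihg =>
      simp only [Sat, ihf fun v hv => h v (.inl hv), ihg fun v hv => h v (.inr hv)]
  | ex v f ih | all v f ih =>
      have key : ∀ p, f.Sat w (Function.update ν v p) ↔ f.Sat w (Function.update ν' v p) :=
        fun p => ih fun x hx => by
          by_cases hxv : x = v
          · simp [hxv]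
          · simp [Function.update_of_ne hxv, h x ⟨hx, hxv⟩]
      simp only [Sat, key]

theorem QF.free_nonempty {f : FO A} (hf : f.QF) : f.free.Nonempty := by
  induction hf with
  | letter a v => exact ⟨v, rfl⟩
  | lt v v' | eq v v' => exact ⟨v, .inl rfl⟩
  | not _ ih => exact ih
  | or _ _ ih _ | and _ _ ih _ => exact ih.mono Set.subset_union_left

theorem QF.rank_eq_zero {f : FO A} (hf : f.QF) : f.rank = 0 := by
  induction hf <;> simp_all [rank]

theorem QF.sat_take_iff {w : List A} {b : ℕ} {f : FO A} (hf : f.QF) {ν : ℕ → ℕ}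
    (hν : ∀ v ∈ f.free, ν v < b) : f.Sat (w.take b) ν ↔ f.Sat w ν := by
  induction hf with
  | letter a v =>
      have hvb := hν v rfl
      simp only [Sat, List.get_eq_getElem, List.getElem_take, List.length_take]
      exact ⟨fun ⟨_, e⟩ => ⟨by omega, e⟩, fun ⟨_, e⟩ => ⟨by omega, e⟩⟩
  | lt v v' | eq v v' => rfl
  | not _ ih => exact not_congr (ih hν)
  | or _ _ ihf ihg | and _ _ ihf ihg =>
      simp only [Sat, ihf fun v hv => hν v (.inl hv), ihg fun v hv => hν v (.inr hv)]

theorem Sig.qf_of_zero {f : FO A} (hf : f.Sig 0) : f.QF := by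
  cases hf with | ofQF h => exact h

/-- Quantifier prefix, `true` marking `∃`. -/
def quant : List (Bool × ℕ) → FO A → FO A
  | [], M => M
  | (true, v) :: qs, M => .ex v (quant qs M)
  | (false, v) :: qs, M => .all v (quant qs M)

def quantifiers : FO A → List (Bool × ℕ)
  | .ex v f => (true, v) :: f.quantifiers
  | .all v f => (false, v) :: f.quantifiers
  | _ => []

def matrix : FO A → FO A
  | .ex _ f => f.matrix
  | .all _ f => f.matrix
  | f => f

theorem quant_quantifiers_matrix (f : FO A) : quant f.quantifiers f.matrix = f := by
  induction f <;> simp_all [quant, quantifiers, matrix]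

theorem QF.quantifiers_eq_nil {f : FO A} (hf : f.QF) : f.quantifiers = [] := by
  cases hf <;> rfl

theorem QF.matrix_eq {f : FO A} (hf : f.QF) : f.matrix = f := by
  cases hf <;> rfl

theorem Sig.matrix_qf {n : ℕ} {f : FO A} (hf : f.Sig n) : f.matrix.QF :=
  Sig.rec (motive_1 := fun _ f _ => f.matrix.QF) (motive_2 := fun _ f _ => f.matrix.QF)
    (fun h => by rwa [h.matrix_eq]) (fun _ ih => ih) (fun _ ih => ih)
    (fun h => by rwa [h.matrix_eq]) (fun _ ih => ih) (fun _ ih => ih) hf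

theorem Sig.quant_of_map_fst_eq {n : ℕ} {f : FO A} (hf : f.Sig n) {qs : List (Bool × ℕ)}
    {N : FO A} (hN : N.QF) (hqs : qs.map Prod.fst = f.quantifiers.map Prod.fst) :
    (quant qs N).Sig n := by
  refine Sig.rec
    (motive_1 := fun n f _ => ∀ qs : List (Bool × ℕ),
      qs.map Prod.fst = f.quantifiers.map Prod.fst → (quant qs N).Sig n)
    (motive_2 := fun n f _ => ∀ qs : List (Bool × ℕ),
      qs.map Prod.fst = f.quantifiers.map Prod.fst → (quant qs N).Pi n)
    ?_ (fun _ ih qs hqs => .ofPi (ih qs hqs)) ?_ ?_ (fun _ ih qs hqs => .ofSig (ih qs hqs)) ?_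
    hf qs hqs
  · intro n f h qs hqs
    obtain rfl : qs = [] := by simpa [h.quantifiers_eq_nil] using hqs
    exact .ofQF hN
  · intro n v f _ ih qs hqs
    match qs, hqs with
    | (true, _) :: qs, hqs => exact .ex (ih qs (List.cons.inj hqs).2)
  · intro n f h qs hqs
    obtain rfl : qs = [] := by simpa [h.quantifiers_eq_nil] using hqs
    exact .ofQF hN
  · intro n v f _ ih qs hqs
    match qs, hqs with
    | (false, _) :: qs, hqs => exact .all (ih qs (List.cons.inj hqs).2)

theorem rank_quant (qs : List (Bool × ℕ)) (M : FO A) :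
    (quant qs M).rank = qs.length + M.rank := by
  induction qs with
  | nil => simp [quant]
  | cons q qs ih =>
      rcases q with ⟨_ | _, v⟩ <;> simp only [quant, rank, ih, List.length_cons] <;> omega

theorem free_quant (qs : List (Bool × ℕ)) (M : FO A) :
    (quant qs M).free = M.free \ {v | v ∈ qs.map Prod.snd} := by
  induction qs with
  | nil => simp [quant]
  | cons q qs ih =>
      rcases q with ⟨_ | _, v⟩ <;>
      · simp only [quant, free, ih, Set.sdiff_sdiff, List.map_cons, List.mem_cons]
        congr 1
        ext x
        exact or_comm

section Quant

variable {W : List A}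

theorem forall_not_mem_cons_eq {qs : List (Bool × ℕ)} {q : Bool} {v p : ℕ} {ν ν' : ℕ → ℕ}
    (h : ∀ x ∉ qs.map Prod.snd, ν' x = Function.update ν v p x) :
    ∀ x ∉ ((q, v) :: qs).map Prod.snd, ν' x = ν x := by
  intro x hx
  simp only [List.map_cons, List.mem_cons, not_or] at hx
  rw [h x hx.2, Function.update_of_ne hx.1]

theorem sat_quant_of_forall (hW : 0 < W.length) {X : FO A} :
    ∀ (qs : List (Bool × ℕ)) (ν : ℕ → ℕ),
      (∀ ν' : ℕ → ℕ, (∀ x ∉ qs.map Prod.snd, ν' x = ν x) → X.Sat W ν') →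
      (quant qs X).Sat W ν
  | [], ν, h => h ν fun _ _ => rfl
  | (q, v) :: qs, ν, h => by
      have step : ∀ p, (quant qs X).Sat W (Function.update ν v p) := fun p =>
        sat_quant_of_forall hW qs _ fun ν' hν' => h ν' (forall_not_mem_cons_eq hν')
      cases q
      · exact fun p _ => step p
      · exact ⟨0, hW, step 0⟩

theorem exists_of_sat_quant (hW : 0 < W.length) {X : FO A} :
    ∀ (qs : List (Bool × ℕ)) (ν : ℕ → ℕ), (quant qs X).Sat W ν →
      ∃ ν' : ℕ → ℕ, (∀ x ∉ qs.map Prod.snd, ν' x = ν x) ∧ X.Sat W ν'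
  | [], ν, h => ⟨ν, fun _ _ => rfl, h⟩
  | (q, v) :: qs, ν, h => by
      obtain ⟨p, hp⟩ : ∃ p, (quant qs X).Sat W (Function.update ν v p) := by
        cases q
        exacts [⟨0, h 0 hW⟩, h.imp fun _ => And.right]
      obtain ⟨ν', hν', hX⟩ := exists_of_sat_quant hW qs _ hp
      exact ⟨ν', forall_not_mem_cons_eq hν', hX⟩

theorem sat_quant_congr {X Y : FO A} :
    ∀ (qs : List (Bool × ℕ)) (ν : ℕ → ℕ),
      (∀ ν' : ℕ → ℕ, (∀ x ∉ qs.map Prod.snd, ν' x = ν x) → (X.Sat W ν' ↔ Y.Sat W ν')) →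
      ((quant qs X).Sat W ν ↔ (quant qs Y).Sat W ν)
  | [], ν, h => h ν fun _ _ => rfl
  | (q, v) :: qs, ν, h => by
      have step : ∀ p, (quant qs X).Sat W (Function.update ν v p) ↔
          (quant qs Y).Sat W (Function.update ν v p) := fun p =>
        sat_quant_congr qs _ fun ν' hν' => h ν' (forall_not_mem_cons_eq hν')
      cases q <;> simp only [quant, Sat, step]

end Quant

/-- Substitution of variables, capture-avoiding only on quantifier-free formulas. -/
def rename (σ : ℕ → ℕ) : FO A → FO A
  | .letter a v => .letter a (σ v)
  | .lt v v' => .lt (σ v) (σ v')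
  | .eq v v' => .eq (σ v) (σ v')
  | .not f => (f.rename σ).not
  | .or f g => (f.rename σ).or (g.rename σ)
  | .and f g => (f.rename σ).and (g.rename σ)
  | .ex v f => .ex (σ v) (f.rename σ)
  | .all v f => .all (σ v) (f.rename σ)

theorem QF.rename {f : FO A} (hf : f.QF) (σ : ℕ → ℕ) : (f.rename σ).QF := by
  induction hf with
  | letter => exact .letter _ _
  | lt => exact .lt _ _
  | eq => exact .eq _ _
  | not _ ih => exact .not ih
  | or _ _ ihf ihg => exact .or ihf ihg
  | and _ _ ihf ihg => exact .and ihf ihg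

theorem QF.free_rename {f : FO A} (hf : f.QF) (σ : ℕ → ℕ) :
    (f.rename σ).free = σ '' f.free := by
  induction hf with
  | letter | lt | eq => simp [FO.rename, free, Set.image_insert_eq]
  | not _ ih => exact ih
  | or _ _ ihf ihg | and _ _ ihf ihg => simp [FO.rename, free, ihf, ihg, Set.image_union]

theorem QF.sat_rename {W : List A} {f : FO A} (hf : f.QF) (σ ν : ℕ → ℕ) :
    (f.rename σ).Sat W ν ↔ f.Sat W (ν ∘ σ) := by
  induction hf with
  | letter | lt | eq => rfl
  | not _ ih => exact not_congr ih
  | or _ _ ihf ihg | and _ _ ihf ihg => simp only [FO.rename, Sat, ihf, ihg]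

def relabel : List (Bool × ℕ) → ℕ → List (Bool × ℕ)
  | [], _ => []
  | (q, _) :: qs, d => (q, d) :: relabel qs (d + 1)

/-- The substitution carrying the matrix along `relabel qs d`; it acts as `σ` on the variables
not bound by `qs`. -/
def relabelSubst : List (Bool × ℕ) → (ℕ → ℕ) → ℕ → ℕ → ℕ
  | [], σ, _ => σ
  | (_, v) :: qs, σ, d => relabelSubst qs (Function.update σ v d) (d + 1)

theorem map_fst_relabel (qs : List (Bool × ℕ)) (d : ℕ) :
    (relabel qs d).map Prod.fst = qs.map Prod.fst := by
  induction qs generalizing d with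
  | nil => rfl
  | cons q qs ih => simp [relabel, ih]

theorem map_snd_relabel (qs : List (Bool × ℕ)) (d : ℕ) :
    (relabel qs d).map Prod.snd = List.range' d qs.length := by
  induction qs generalizing d with
  | nil => rfl
  | cons q qs ih => simp [relabel, ih, List.range'_succ]

theorem relabelSubst_of_not_mem {qs : List (Bool × ℕ)} {v : ℕ} (hv : v ∉ qs.map Prod.snd)
    (σ : ℕ → ℕ) (d : ℕ) : relabelSubst qs σ d v = σ v := by
  induction qs generalizing σ d with
  | nil => rfl
  | cons q qs ih =>
      simp only [List.map_cons, List.mem_cons, not_or] at hv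
      rw [relabelSubst, ih hv.2, Function.update_of_ne hv.1]

theorem relabelSubst_mem {qs : List (Bool × ℕ)} {v : ℕ} (hv : v ∈ qs.map Prod.snd)
    (σ : ℕ → ℕ) (d : ℕ) : relabelSubst qs σ d v ∈ List.range' d qs.length := by
  induction qs generalizing σ d with
  | nil => simp at hv
  | cons q qs ih =>
      rw [relabelSubst, List.length_cons, List.range'_succ, List.mem_cons]
      by_cases hvq : v ∈ qs.map Prod.snd
      · exact .inr (ih hvq _ _)
      · left
        simp only [List.map_cons, List.mem_cons] at hv
        rw [relabelSubst_of_not_mem hvq, hv.resolve_right hvq, Function.update_self]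

theorem sat_quant_relabel {W : List A} {M : FO A} (hM : M.QF) :
    ∀ (qs : List (Bool × ℕ)) (σ : ℕ → ℕ) (d : ℕ), (∀ u, σ u < d) → ∀ ν : ℕ → ℕ,
      (quant (relabel qs d) (M.rename (relabelSubst qs σ d))).Sat W ν ↔
        (quant qs M).Sat W (ν ∘ σ)
  | [], σ, _, _, ν => hM.sat_rename σ ν
  | (q, v) :: qs, σ, d, hσ, ν => by
      have hσ' : ∀ u, Function.update σ v d u < d + 1 := fun u => by
        by_cases huv : u = v
        · simp [huv]
        · rw [Function.update_of_ne huv]; exact (hσ u).trans d.lt_succ_self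
      have hcomp : ∀ p,
          Function.update ν d p ∘ Function.update σ v d = Function.update (ν ∘ σ) v p :=
        fun p => funext fun u => by
          by_cases huv : u = v
          · simp [huv]
          · simp [Function.update_of_ne huv, Function.update_of_ne (hσ u).ne]
      cases q <;>
      simp only [relabel, relabelSubst, quant, Sat, sat_quant_relabel hM qs _ _ hσ', hcomp]

def relGuard (y : ℕ) : Bool × ℕ → FO A → FO A
  | (true, v), X => (FO.lt v y).and X
  | (false, v), X => ((FO.lt v y).or (FO.eq v y)).and ((FO.lt v y).not.or X)

def relativize (y : ℕ) (qs : List (Bool × ℕ)) (X : FO A) : FO A :=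
  qs.foldr (relGuard y) X

theorem QF.relativize {X : FO A} (hX : X.QF) (y : ℕ) (qs : List (Bool × ℕ)) :
    (relativize y qs X).QF := by
  induction qs with
  | nil => exact hX
  | cons q qs ih =>
      rcases q with ⟨_ | _, v⟩
      exacts [.and (.or (.lt _ _) (.eq _ _)) (.or (.not (.lt _ _)) ih), .and (.lt _ _) ih]

theorem mem_free_relativize {y : ℕ} {qs : List (Bool × ℕ)} {X : FO A} {x : ℕ}
    (hx : x ∈ (relativize y qs X).free) : x ∈ X.free ∨ x = y ∨ x ∈ qs.map Prod.snd := by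
  induction qs with
  | nil => exact .inl hx
  | cons q qs ih =>
      have key : x = q.2 ∨ x = y ∨ x ∈ (relativize y qs X).free := by
        rcases q with ⟨_ | _, v⟩ <;>
        simpa [relativize, relGuard, free, or_assoc, or_left_comm] using hx
      rw [List.map_cons, List.mem_cons]
      rcases key with h | h | h
      exacts [.inr (.inr (.inl h)), .inr (.inl h), (ih h).imp_right (.imp_right .inr)]

section Relativize

variable {W : List A} {y : ℕ} {M : FO A}

theorem sat_quant_relGuard_iff {q : Bool} {v : ℕ} {qs : List (Bool × ℕ)} {X : FO A}
    {ν : ℕ → ℕ} (hv : v ∉ qs.map Prod.snd) (hy : y ∉ qs.map Prod.snd) (hlt : ν v < ν y) :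
    (quant qs (relGuard y (q, v) X)).Sat W ν ↔ (quant qs X).Sat W ν :=
  sat_quant_congr qs ν fun ν' hν' => by
    rw [← hν' v hv, ← hν' y hy] at hlt
    cases q <;> simp [relGuard, Sat, hlt]

theorem free_mem_or_lt_update {qs : List (Bool × ℕ)} {q : Bool} {v p : ℕ} {ν : ℕ → ℕ}
    (hyv : y ≠ v) (hp : p < ν y)
    (h : ∀ u ∈ M.free, u ∈ ((q, v) :: qs).map Prod.snd ∨ ν u < ν y) :
    ∀ u ∈ M.free, u ∈ qs.map Prod.snd ∨ Function.update ν v p u < Function.update ν v p y := by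
  intro u hu
  rw [Function.update_of_ne hyv]
  by_cases huv : u = v
  · simp [huv, hp]
  · simpa [Function.update_of_ne huv, huv] using h u hu

theorem sat_quant_relativize_of_sat_dropLast (hM : M.QF) :
    ∀ (qs : List (Bool × ℕ)) (ν : ℕ → ℕ), (qs.map Prod.snd).Nodup → y ∉ qs.map Prod.snd →
      (∀ u ∈ M.free, u ∈ qs.map Prod.snd ∨ ν u < ν y) → ν y + 1 = W.length →
      (quant qs M).Sat W.dropLast ν → (quant qs (relativize y qs M)).Sat W ν
  | [], ν, _, _, hfree, hlast, h => by
      rw [List.dropLast_eq_take] at h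
      exact (hM.sat_take_iff fun u hu => by
        have := (hfree u hu).resolve_left List.not_mem_nil; omega).1 h
  | (q, v) :: qs, ν, hnd, hy, hfree, hlast, h => by
      rw [List.map_cons, List.nodup_cons] at hnd
      have hy' : y ≠ v ∧ y ∉ qs.map Prod.snd := by simpa using hy
      have hdrop : W.dropLast.length = ν y := by rw [List.length_dropLast]; omega
      have inner : ∀ p < ν y, (quant qs M).Sat W.dropLast (Function.update ν v p) →
          (quant qs (relGuard y (q, v) (relativize y qs M))).Sat W (Function.update ν v p) :=
        fun p hp hs => (sat_quant_relGuard_iff hnd.1 hy'.2 (by simpa [hy'.1] using hp)).2 <|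
          sat_quant_relativize_of_sat_dropLast hM qs _ hnd.2 hy'.2
            (free_mem_or_lt_update hy'.1 hp hfree) (by rwa [Function.update_of_ne hy'.1]) hs
      cases q
      · intro p hp
        by_cases hpy : p < ν y
        · exact inner p hpy (h p (hdrop ▸ hpy))
        -- `p` is the last position: the guard `v < y → _` holds vacuously
        refine sat_quant_of_forall (by omega) qs _ fun ν' hν' => ?_
        have hν'v : ν' v = ν y := by rw [hν' v hnd.1, Function.update_self]; omega
        have hν'y : ν' y = ν y := by rw [hν' y hy'.2, Function.update_of_ne hy'.1]
        simp [relativize, relGuard, Sat, hν'v, hν'y]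
      · obtain ⟨p, hp, hs⟩ := h
        exact ⟨p, by omega, inner p (hdrop ▸ hp) hs⟩

theorem sat_dropLast_of_sat_quant_relativize (hM : M.QF) :
    ∀ (qs : List (Bool × ℕ)) (ν : ℕ → ℕ), (qs.map Prod.snd).Nodup → y ∉ qs.map Prod.snd →
      (∀ u ∈ M.free, u ∈ qs.map Prod.snd ∨ ν u < ν y) → ν y < W.length →
      (quant qs (relativize y qs M)).Sat W ν → (quant qs M).Sat W.dropLast ν
  | [], ν, _, _, hfree, hyW, h => by
      rw [List.dropLast_eq_take]
      exact (hM.sat_take_iff fun u hu => by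
        have := (hfree u hu).resolve_left List.not_mem_nil; omega).2 h
  | (q, v) :: qs, ν, hnd, hy, hfree, hyW, h => by
      rw [List.map_cons, List.nodup_cons] at hnd
      have hy' : y ≠ v ∧ y ∉ qs.map Prod.snd := by simpa using hy
      have inner : ∀ p < ν y,
          (quant qs (relGuard y (q, v) (relativize y qs M))).Sat W (Function.update ν v p) →
          (quant qs M).Sat W.dropLast (Function.update ν v p) :=
        fun p hp hs => sat_dropLast_of_sat_quant_relativize hM qs _ hnd.2 hy'.2
          (free_mem_or_lt_update hy'.1 hp hfree) (by rwa [Function.update_of_ne hy'.1])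
          ((sat_quant_relGuard_iff hnd.1 hy'.2 (by simpa [hy'.1] using hp)).1 hs)
      -- the guard of `v` can be read off the matrix, whatever the later variables are
      have guard : ∀ p,
          (quant qs (relGuard y (q, v) (relativize y qs M))).Sat W (Function.update ν v p) →
          ∃ ν' : ℕ → ℕ, ν' v = p ∧ ν' y = ν y ∧
            (relGuard y (q, v) (relativize y qs M)).Sat W ν' := by
        intro p hs
        obtain ⟨ν', hν', hs⟩ := exists_of_sat_quant (by omega) qs _ hs
        exact ⟨ν', by rw [hν' v hnd.1, Function.update_self],
          by rw [hν' y hy'.2, Function.update_of_ne hy'.1], hs⟩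
      cases q
      · have hlast : W.length - 1 ≤ ν y := by
          obtain ⟨ν', hv, hy, hg⟩ := guard _ (h (W.length - 1) (by omega))
          simp only [relGuard, Sat, hv, hy] at hg
          omega
        intro p hp
        rw [List.length_dropLast] at hp
        exact inner p (by omega) (h p (by omega))
      · obtain ⟨p, hp, hs⟩ := h
        obtain ⟨ν', hv, hy, hg⟩ := guard p hs
        simp only [relGuard, Sat, hv, hy] at hg
        exact ⟨p, by rw [List.length_dropLast]; omega, inner p hg.1 hs⟩

end Relativize

/-- `∃ y, φ^{<y}`, with `y` the variable `0` and the bound variables of `φ` renamed to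
`1, 2, …`. -/
def dropLastSentence (φ : FO A) : FO A :=
  .ex 0 (quant (relabel φ.quantifiers 1) (relativize 0 (relabel φ.quantifiers 1)
    (φ.matrix.rename (relabelSubst φ.quantifiers (fun _ => 0) 1))))

section DropLastSentence

variable {φ : FO A}

theorem free_matrix_subset (hφ : φ.free = ∅) :
    φ.matrix.free ⊆ {v | v ∈ φ.quantifiers.map Prod.snd} := by
  rw [← Set.sdiff_eq_empty, ← free_quant, quant_quantifiers_matrix, hφ]

theorem free_rename_matrix_subset (hM : φ.matrix.QF) (hφ : φ.free = ∅) :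
    (φ.matrix.rename (relabelSubst φ.quantifiers (fun _ => 0) 1)).free ⊆
      {v | v ∈ (relabel φ.quantifiers 1).map Prod.snd} := by
  rw [hM.free_rename, Set.image_subset_iff, map_snd_relabel]
  exact fun v hv => relabelSubst_mem (free_matrix_subset hφ hv) _ _

theorem rank_dropLastSentence (hM : φ.matrix.QF) : φ.dropLastSentence.rank = φ.rank + 1 := by
  conv_rhs => rw [← quant_quantifiers_matrix φ]
  rw [dropLastSentence, rank, rank_quant, rank_quant, hM.rank_eq_zero,
    ((hM.rename _).relativize _ _).rank_eq_zero]
  simpa using congrArg List.length (map_fst_relabel φ.quantifiers 1)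

theorem free_dropLastSentence (hM : φ.matrix.QF) (hφ : φ.free = ∅) :
    φ.dropLastSentence.free = ∅ := by
  rw [dropLastSentence, free, free_quant, Set.eq_empty_iff_forall_notMem]
  rintro x ⟨⟨hx, hxq⟩, hx0⟩
  rcases mem_free_relativize hx with hx | hx | hx
  exacts [hxq (free_rename_matrix_subset hM hφ hx), hx0 hx, hxq hx]

theorem Sig.dropLastSentence {n : ℕ} (hφ : φ.Sig n) (hfree : φ.free = ∅) :
    φ.dropLastSentence.Sig n := by
  cases n with
  | zero => exact absurd hfree hφ.qf_of_zero.free_nonempty.ne_empty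
  | succ n =>
      exact .ex (hφ.quant_of_map_fst_eq ((hφ.matrix_qf.rename _).relativize _ _)
        (map_fst_relabel _ _))

theorem sat_dropLastSentence_iff (hM : φ.matrix.QF) (hφ : φ.free = ∅) {W : List A}
    (hW : W ≠ []) (ν ν' : ℕ → ℕ) : φ.dropLastSentence.Sat W ν ↔ φ.Sat W.dropLast ν' := by
  set qs := relabel φ.quantifiers 1
  set M := φ.matrix.rename (relabelSubst φ.quantifiers (fun _ => 0) 1)
  have hvars : qs.map Prod.snd = List.range' 1 φ.quantifiers.length := map_snd_relabel _ _
  have hnd : (qs.map Prod.snd).Nodup := hvars ▸ List.nodup_range'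
  have hy : 0 ∉ qs.map Prod.snd := by simp [hvars]
  have hfree : ∀ v ∈ M.free, v ∈ qs.map Prod.snd := free_rename_matrix_subset hM hφ
  have hcanon : ∀ μ, (quant qs M).Sat W.dropLast μ ↔ φ.Sat W.dropLast ν' := fun μ => by
    rw [sat_quant_relabel hM _ _ _ (fun _ => Nat.one_pos), quant_quantifiers_matrix]
    exact sat_congr (by simp [hφ])
  have hlen : 0 < W.length := List.length_pos_iff.2 hW
  constructor
  · rintro ⟨p, hp, h⟩
    exact (hcanon _).1 (sat_dropLast_of_sat_quant_relativize (hM.rename _) qs _ hnd hy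
      (fun u hu => .inl (hfree u hu)) (by simpa using hp) h)
  · intro h
    exact ⟨W.length - 1, by omega, sat_quant_relativize_of_sat_dropLast (hM.rename _) qs _
      hnd hy (fun u hu => .inl (hfree u hu)) (by simp; omega) ((hcanon _).2 h)⟩

end DropLastSentence

end FO

section SigLe

variable {A : Type*} {n k : ℕ}

theorem SigLe.mono {k' : ℕ} {w w' : List A} (h : SigLe n k' w w') (hk : k ≤ k') :
    SigLe n k w w' :=
  fun f hf hfree hrank => h f hf hfree (hrank.trans hk)

theorem SigLe.dropLast {W W' : List A} (h : SigLe n (k + 1) W W') (hW : W ≠ []) :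
    SigLe n k W.dropLast W'.dropLast := by
  intro φ hφ hfree hrank hsat
  have hM := hφ.matrix_qf
  have hψ := h φ.dropLastSentence (hφ.dropLastSentence hfree) (FO.free_dropLastSentence hM hfree)
    (by rw [FO.rank_dropLastSentence hM]; omega)
    ((FO.sat_dropLastSentence_iff hM hfree hW _ _).2 hsat)
  have hW' : W' ≠ [] := by
    rintro rfl
    obtain ⟨p, hp, -⟩ := hψ
    exact p.not_lt_zero hp
  exact (FO.sat_dropLastSentence_iff hM hfree hW' _ _).1 hψ

end SigLe

/-- For every `n ≥ 1`, `k, h ∈ ℕ` and words `w, w', u` with `|u| ≤ h`: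
if `wu ≼_{k+h} w'u` (w.r.t. `Σ_n(<)`) then `w ≼ₖ w'`. -/
theorem sig_remove_suffix {A : Type*} (n : ℕ) (hn : 1 ≤ n) (k h : ℕ)
    (w w' u : List A) (hu : u.length ≤ h)
    (hle : SigLe n (k + h) (w ++ u) (w' ++ u)) :
    SigLe n k w w' := by
  induction u using List.reverseRecOn generalizing h with
  | nil => simpa using hle.mono (Nat.le_add_right k h)
  | append_singleton u a ih =>
      rw [List.length_append, List.length_singleton] at hu
      have := (hle.mono (k := k + u.length + 1) (by omega)).dropLast (by simp)
      exact ih u.length le_rfl (by simpa using this)
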